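/- Let K_1,...,K_n be i.i.d. ℕ-valued random variables with law Q(y) and let μ be a finite measure on [0,1]. Then for every x in [0,1] and n ∈ ℕ: ∫ [ (E[x^{K_y}])^n − x^n ] μ(dy) = ∫ [ ∑_{k=n}^∞ P(∑_{j=1}^n K_{y,j} = k)·(x^k − x^n) ] μ(dy), i.e. the rare-selection generator applied to x ↦ x^n equals the branching generator of the dual chain applied to n ↦ x^n. -/

import Mathlib

/-!
With `S = K_{y,1} + ⋯ + K_{y,n}`, independence and identical distribution give
`(E x^{K_y})^n = E x^S`. Since every `K_{y,i} ≥ 1` we have `S ≥ n`, so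
`E x^S - x^n = E (x^S - x^n) = ∑_{m ≥ n} P(S = m) (x^m - x^n)`; the identity already holds for
each `y` before integrating against `μ`.
-/

open MeasureTheory ProbabilityTheory

section

variable {Ω : Type*} [MeasurableSpace Ω] {P : Measure Ω}

lemma integral_comp_nat_eq_tsum [IsFiniteMeasure P] {S : Ω → ℕ} (hS : Measurable S)
    {g : ℕ → ℝ} {C : ℝ} (hg : ∀ k, ‖g k‖ ≤ C) :
    ∫ ω, g (S ω) ∂P = ∑' k, P.real {ω | S ω = k} * g k := by
  have hint : Integrable g (P.map S) :=
    .of_bound measurable_from_nat.aestronglyMeasurable C (.of_forall hg)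
  rw [← integral_map hS.aemeasurable hint.aestronglyMeasurable, integral_countable hint]
  refine tsum_congr fun k => ?_
  rw [map_measureReal_apply hS (measurableSet_singleton k), smul_eq_mul]
  rfl

lemma tsum_measureReal_nat_add_eq_tsum {S : Ω → ℕ} {n : ℕ} (hS : ∀ ω, n ≤ S ω) (g : ℕ → ℝ) :
    ∑' k, P.real {ω | S ω = n + k} * g (n + k) = ∑' m, P.real {ω | S ω = m} * g m := by
  refine (add_right_injective n).tsum_eq (f := fun m => P.real {ω | S ω = m} * g m) fun m hm => ?_
  obtain ⟨ω, rfl⟩ : {ω | S ω = m}.Nonempty := by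
    by_contra h
    simp [Set.not_nonempty_iff_eq_empty.mp h] at hm
  exact ⟨S ω - n, Nat.add_sub_cancel' (hS ω)⟩

lemma integral_pow_sum_eq_pow_integral {ι : Type*} [Fintype ι] {K : ι → Ω → ℕ} {K0 : Ω → ℕ}
    (hK : ∀ i, Measurable (K i)) (hK0 : Measurable K0) (hindep : iIndepFun K P)
    (hident : ∀ i, P.map (K i) = P.map K0) (x : ℝ) :
    ∫ ω, x ^ (∑ i, K i ω) ∂P = (∫ ω, x ^ K0 ω ∂P) ^ Fintype.card ι := by
  simp_rw [← Finset.prod_pow_eq_pow_sum]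
  rw [hindep.integral_fun_prod_comp (f := fun _ k => x ^ k) (fun i => (hK i).aemeasurable)
    (fun _ => measurable_from_nat.aestronglyMeasurable)]
  have hsame : ∀ i, ∫ ω, x ^ K i ω ∂P = ∫ ω, x ^ K0 ω ∂P := fun i =>
    ((IdentDistrib.mk (hK i).aemeasurable hK0.aemeasurable (hident i)).comp
      (u := fun k : ℕ => x ^ k) measurable_from_nat).integral_eq
  simp [hsame]

end

theorem stmt4_general {Ω : Type*} [MeasureSpace Ω] [IsProbabilityMeasure (ℙ : Measure Ω)]
    (n : ℕ) (μ : Measure ℝ)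
    (K : ℝ → Fin n → Ω → ℕ) (K0 : ℝ → Ω → ℕ)
    (hK1 : ∀ y i ω, 1 ≤ K y i ω) (hmeas : ∀ y i, Measurable (K y i))
    (hmeas0 : ∀ y, Measurable (K0 y))
    (hindep : ∀ y, iIndepFun (K y) ℙ)
    (hident : ∀ y i, Measure.map (K y i) ℙ = Measure.map (K0 y) ℙ)
    (x : ℝ) (hx : x ∈ Set.Icc (0:ℝ) 1) :
    ∫ y, ((∫ ω, x ^ K0 y ω ∂ℙ) ^ n - x ^ n) ∂μ
      = ∫ y, ∑' k : ℕ, (ℙ {ω | (∑ i, K y i ω) = n + k}).toReal * (x ^ (n + k) - x ^ n) ∂μ := by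
  refine integral_congr_ae (.of_forall fun y => ?_)
  have hS : Measurable fun ω => ∑ i, K y i ω := Finset.measurable_sum _ fun i _ => hmeas y i
  have hn_le : ∀ ω, n ≤ ∑ i, K y i ω := fun ω => by
    simpa using Finset.card_nsmul_le_sum Finset.univ _ 1 fun i _ => hK1 y i ω
  have hpow_le : ∀ k, x ^ k ≤ 1 := fun k => pow_le_one₀ hx.1 hx.2
  have hbound : ∀ k, ‖x ^ k - x ^ n‖ ≤ 1 := fun k => abs_sub_le_of_nonneg_of_le
    (pow_nonneg hx.1 k) (hpow_le k) (pow_nonneg hx.1 n) (hpow_le n)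
  have hint : Integrable (fun ω => x ^ (∑ i, K y i ω)) ℙ :=
    .of_bound (measurable_from_nat.comp hS).aestronglyMeasurable 1
      (.of_forall fun ω => by rw [norm_pow, Real.norm_of_nonneg hx.1]; exact hpow_le _)
  calc (∫ ω, x ^ K0 y ω) ^ n - x ^ n
      = ∫ ω, (x ^ (∑ i, K y i ω) - x ^ n) := by
        rw [integral_sub hint (integrable_const _), integral_pow_sum_eq_pow_integral (hmeas y)
          (hmeas0 y) (hindep y) (hident y)]
        simp
    _ = ∑' m, (ℙ : Measure Ω).real {ω | ∑ i, K y i ω = m} * (x ^ m - x ^ n) :=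
        integral_comp_nat_eq_tsum hS hbound
    _ = _ := (tsum_measureReal_nat_add_eq_tsum hn_le _).symm

theorem stmt4 {Ω : Type*} [MeasureSpace Ω] [IsProbabilityMeasure (ℙ : Measure Ω)]
    (n : ℕ) (hn : 1 ≤ n) (μ : Measure ℝ) [IsFiniteMeasure μ]
    (hμsupp : μ (Set.Icc (0:ℝ) 1)ᶜ = 0)
    (K : ℝ → Fin n → Ω → ℕ) (K0 : ℝ → Ω → ℕ)
    (hK1 : ∀ y i ω, 1 ≤ K y i ω) (hmeas : ∀ y i, Measurable (K y i))
    (hmeas0 : ∀ y, Measurable (K0 y))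
    (hindep : ∀ y, iIndepFun (K y) ℙ)
    (hident : ∀ y i, Measure.map (K y i) ℙ = Measure.map (K0 y) ℙ)
    (x : ℝ) (hx : x ∈ Set.Icc (0:ℝ) 1) :
    ∫ y, ((∫ ω, x ^ K0 y ω ∂ℙ) ^ n - x ^ n) ∂μ
      = ∫ y, ∑' k : ℕ, (ℙ {ω | (∑ i, K y i ω) = n + k}).toReal * (x ^ (n + k) - x ^ n) ∂μ :=
  stmt4_general n μ K K0 hK1 hmeas hmeas0 hindep hident x hx
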